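/- For Im z > 0 set L(z) = Σ_{j=0}^m β_j Log(z−x_j), so that D(z) = exp(L(z)). Then for every integer k ≥ 1 there exist constants C > 0 and R > 0 such that for all z with Im z > 0 and |z| ≥ R, | L(z) − Σ_{ℓ=1}^k d_ℓ z^{−ℓ} | ≤ C |z|^{−k−1}, where d_ℓ = −(1/ℓ) Σ_{j=0}^m β_j x_j^ℓ. Moreover d_ℓ = −(1/(2πiℓ)) Σ_{j=1}^m (log s_j)(x_j^ℓ − x_{j−1}^ℓ). In particular z·(D(z) − 1) → d₁ = −Σ_{j=0}^m β_j x_j as z → ∞ in the upper half-plane. -/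

import Mathlib

open Complex Finset Filter

/-- `β_j = (1/(2πi)) log(s_j/s_{j+1})`. -/
noncomputable def betaCoef (s : ℕ → ℝ) (j : ℕ) : ℂ :=
  1 / (2 * ↑Real.pi * Complex.I) * ↑(Real.log (s j / s (j + 1)))

/-- `L(z) = Σ_{j=0}^m β_j Log(z−x_j)` (principal logarithm). -/
noncomputable def szegoL (m : ℕ) (x s : ℕ → ℝ) (z : ℂ) : ℂ :=
  ∑ j ∈ Finset.Icc 0 m, betaCoef s j * Complex.log (z - ↑(x j))

/-- `D(z) = ∏_{j=0}^m (z−x_j)^{β_j}` (principal powers), for `Im z > 0`. -/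
noncomputable def szegoDup (m : ℕ) (x s : ℕ → ℝ) (z : ℂ) : ℂ :=
  ∏ j ∈ Finset.Icc 0 m, (z - ↑(x j)) ^ betaCoef s j

/-- `d_ℓ = −(1/ℓ) Σ_{j=0}^m β_j x_j^ℓ`. -/
noncomputable def dCoef (m : ℕ) (x s : ℕ → ℝ) (ℓ : ℕ) : ℂ :=
  -(1 / (ℓ : ℂ)) * ∑ j ∈ Finset.Icc 0 m, betaCoef s j * (↑(x j) : ℂ) ^ ℓ

/- ### Auxiliary lemmas -/

lemma log_mul_of_im_pos {z w : ℂ} (hz : 0 < z.im) (hzw : 0 < (z * w).im)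
    (hw : 0 < w.re) : Complex.log (z * w) = Complex.log z + Complex.log w := by
  have hz0 : z ≠ 0 := fun h => by simp [h] at hz
  have hw0 : w ≠ 0 := fun h => by simp [h] at hw
  refine Complex.log_mul hz0 hw0 ⟨?_, ?_⟩
  · have h1 : 0 ≤ arg z := Complex.arg_nonneg_iff.mpr hz.le
    have h2 : -(Real.pi / 2) < arg w := Complex.neg_pi_div_two_lt_arg_iff.mpr (Or.inl hw)
    have := Real.pi_pos
    linarith
  · by_contra hgt
    push_neg at hgt
    have h2 : arg w < Real.pi / 2 := Complex.arg_lt_pi_div_two_iff.mpr (Or.inl hw)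
    have h3 : arg z ≤ Real.pi := Complex.arg_le_pi z
    set t : ℝ := arg z + arg w with ht
    have him : (z * w).im = (‖z‖ * ‖w‖) * Real.sin t := by
      conv_lhs => rw [← Complex.norm_mul_exp_arg_mul_I z, ← Complex.norm_mul_exp_arg_mul_I w]
      rw [mul_mul_mul_comm, ← Complex.exp_add, ← Complex.ofReal_mul, ← add_mul,
        ← Complex.ofReal_add, ← ht]
      simp [Complex.mul_im, Complex.exp_ofReal_mul_I_re, Complex.exp_ofReal_mul_I_im]
    have hsin : Real.sin t < 0 := by
      have h4 : Real.sin (t - Real.pi) > 0 := by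
        refine Real.sin_pos_of_pos_of_lt_pi (by linarith) (by linarith)
      have := Real.sin_sub_pi t
      linarith [this ▸ h4]
    have habs : 0 < ‖z‖ * ‖w‖ :=
      mul_pos (norm_pos_iff.mpr hz0) (norm_pos_iff.mpr hw0)
    nlinarith [hzw, him ▸ hzw]

lemma log_split {z : ℂ} (hz : 0 < z.im) {x : ℝ} (h : ‖(x : ℂ) / z‖ ≤ 1 / 2) :
    Complex.log (z - (x : ℂ)) = Complex.log z + Complex.log (1 - (x : ℂ) / z) := by
  have hz0 : z ≠ 0 := fun h => by simp [h] at hz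
  have hre : 0 < (1 - (x : ℂ) / z).re := by
    have : |((x : ℂ) / z).re| ≤ ‖(x : ℂ) / z‖ := Complex.abs_re_le_norm _
    simp only [Complex.sub_re, Complex.one_re]
    have := abs_le.mp this
    linarith
  have hzw : z * (1 - (x : ℂ) / z) = z - (x : ℂ) := by field_simp
  have him : 0 < (z * (1 - (x : ℂ) / z)).im := by rw [hzw]; simpa using hz
  rw [← hzw]; exact log_mul_of_im_pos hz him hre

lemma logTaylor_neg (k : ℕ) (w : ℂ) :
    Complex.logTaylor (k + 1) (-w) = -∑ ℓ ∈ Finset.Icc 1 k, w ^ ℓ / ℓ := by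
  rw [Complex.logTaylor]
  have hins : Finset.range (k + 1) = insert 0 (Finset.Icc 1 k) := by
    ext j; simp; omega
  rw [hins, Finset.sum_insert (by simp)]
  have h0 : ((-1 : ℂ)) ^ (0 + 1) * (-w) ^ 0 / ((0 : ℕ) : ℂ) = 0 := by simp
  rw [h0, zero_add, ← Finset.sum_neg_distrib]
  refine Finset.sum_congr rfl fun j hj => ?_
  have hp : ((-1 : ℂ)) ^ (j + 1) * (-w) ^ j = -(w ^ j) := by
    have hne : (-w) ^ j = (-1 : ℂ) ^ j * w ^ j := by
      rw [neg_eq_neg_one_mul w, mul_pow]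
    rw [hne, ← mul_assoc, ← pow_add, show j + 1 + j = 2 * j + 1 by ring,
      pow_succ, pow_mul]
    norm_num
  rw [hp, neg_div]

lemma log_taylor_bound {w : ℂ} (hw : ‖w‖ ≤ 1 / 2) (k : ℕ) :
    ‖Complex.log (1 - w) + ∑ ℓ ∈ Finset.Icc 1 k, w ^ ℓ / ℓ‖
      ≤ 2 * ‖w‖ ^ (k + 1) := by
  have hw1 : ‖(-w)‖ < 1 := by
    rw [norm_neg]; linarith
  have h := Complex.norm_log_sub_logTaylor_le k hw1
  rw [logTaylor_neg, sub_neg_eq_add, ← sub_eq_add_neg] at h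
  rw [norm_neg] at h
  have hden : (1 - ‖w‖)⁻¹ ≤ 2 := by
    rw [show (2:ℝ) = (1/2:ℝ)⁻¹ by norm_num]
    exact inv_anti₀ (by norm_num) (by linarith)
  calc ‖Complex.log (1 - w) + ∑ ℓ ∈ Finset.Icc 1 k, w ^ ℓ / ℓ‖
      ≤ ‖w‖ ^ (k + 1) * (1 - ‖w‖)⁻¹ / (k + 1) := h
    _ ≤ ‖w‖ ^ (k + 1) * 2 / 1 := by
        apply div_le_div₀ (by positivity) _ one_pos _
        · exact mul_le_mul_of_nonneg_left hden (by positivity)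
        · have : (0 : ℝ) ≤ (k : ℝ) := Nat.cast_nonneg k
          linarith
    _ = 2 * ‖w‖ ^ (k + 1) := by ring

lemma abel_aux (a p : ℕ → ℂ) : ∀ n : ℕ,
    ∑ j ∈ Finset.range (n + 1), (a j - a (j + 1)) * p j
      = a 0 * p 0 - a (n + 1) * p n + ∑ j ∈ Finset.range n, a (j + 1) * (p (j + 1) - p j)
  | 0 => by simp; ring
  | (n + 1) => by
    rw [Finset.sum_range_succ, abel_aux a p n, Finset.sum_range_succ]
    ring

theorem szegoL_asymptotic_expansion
    (m : ℕ) (hm : 1 ≤ m) (x s : ℕ → ℝ)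
    (hx : ∀ j, j < m → x j < x (j + 1))
    (hs : ∀ j, 1 ≤ j → j ≤ m → 0 < s j)
    (hs0 : s 0 = 1) (hsm : s (m + 1) = 1) :
    (∀ k : ℕ, 1 ≤ k → ∃ C > (0 : ℝ), ∃ R > (0 : ℝ), ∀ z : ℂ, 0 < z.im → R ≤ ‖z‖ →
        ‖szegoL m x s z - ∑ ℓ ∈ Finset.Icc 1 k, dCoef m x s ℓ * z ^ (-(ℓ : ℤ))‖
          ≤ C * ‖z‖ ^ (-((k : ℤ) + 1))) ∧
    (∀ ℓ : ℕ, 1 ≤ ℓ →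
        dCoef m x s ℓ = -(1 / (2 * ↑Real.pi * Complex.I * (ℓ : ℂ))) *
          ∑ j ∈ Finset.Icc 1 m,
            (↑(Real.log (s j)) : ℂ) * ((↑(x j) : ℂ) ^ ℓ - (↑(x (j - 1)) : ℂ) ^ ℓ)) ∧
    (Filter.Tendsto (fun z : ℂ => z * (szegoDup m x s z - 1))
        (Filter.comap (fun z : ℂ => ‖z‖) Filter.atTop ⊓ Filter.principal {z : ℂ | 0 < z.im})
        (nhds (dCoef m x s 1))) := by
  -- common set-up
  have hsne : ∀ j, j ≤ m + 1 → s j ≠ 0 := by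
    intro j hj
    by_cases h0 : j = 0
    · rw [h0, hs0]; norm_num
    by_cases h1 : j = m + 1
    · rw [h1, hsm]; norm_num
    · exact (hs j (by omega) (by omega)).ne'
  set c : ℂ := 1 / (2 * Real.pi * Complex.I) with hc
  set a : ℕ → ℂ := fun j => ((Real.log (s j) : ℝ) : ℂ) with ha
  have hbeta : ∀ j ∈ Finset.Icc 0 m, betaCoef s j = c * (a j - a (j + 1)) := by
    intro j hj
    simp only [Finset.mem_Icc] at hj
    rw [betaCoef, Real.log_div (hsne j (by omega)) (hsne (j + 1) (by omega))]
    push_cast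
    ring
  have ha0 : a 0 = 0 := by simp [ha, hs0]
  have ham : a (m + 1) = 0 := by simp [ha, hsm]
  have hIcc : Finset.Icc 0 m = Finset.range (m + 1) := by ext j; simp
  have hbsum : ∑ j ∈ Finset.Icc 0 m, betaCoef s j = 0 := by
    rw [Finset.sum_congr rfl hbeta, ← Finset.mul_sum, hIcc,
      Finset.sum_range_sub' a, ha0, ham, sub_zero, mul_zero]
  -- Part 1
  have part1 : ∀ k : ℕ, 1 ≤ k → ∃ C > (0 : ℝ), ∃ R > (0 : ℝ),
      ∀ z : ℂ, 0 < z.im → R ≤ ‖z‖ →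
      ‖szegoL m x s z - ∑ ℓ ∈ Finset.Icc 1 k, dCoef m x s ℓ * z ^ (-(ℓ : ℤ))‖
        ≤ C * ‖z‖ ^ (-((k : ℤ) + 1)) := by
    intro k hk
    set M : ℝ := 1 + ∑ j ∈ Finset.Icc 0 m, |x j| with hMdef
    have hM1 : 1 ≤ M := by
      have : (0:ℝ) ≤ ∑ j ∈ Finset.Icc 0 m, |x j| :=
        Finset.sum_nonneg fun j _ => abs_nonneg _
      simp only [hMdef]; linarith
    have hMx : ∀ j ∈ Finset.Icc 0 m, |x j| ≤ M := by
      intro j hj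
      have := Finset.single_le_sum (f := fun j => |x j|) (fun i _ => abs_nonneg _) hj
      simp only [hMdef]; linarith
    set B : ℝ := ∑ j ∈ Finset.Icc 0 m, ‖betaCoef s j‖ with hBdef
    have hB : 0 ≤ B := Finset.sum_nonneg fun j _ => norm_nonneg _
    refine ⟨(B + 1) * 2 * M ^ (k + 1), by positivity, 2 * M, by positivity, ?_⟩
    intro z hzim hzR
    have hz0 : z ≠ 0 := fun h => by simp [h] at hzim
    have hzpos : 0 < ‖z‖ := lt_of_lt_of_le (by linarith) hzR
    have hhalf : M / ‖z‖ ≤ 1 / 2 := by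
      rw [div_le_div_iff₀ hzpos (by norm_num)]
      linarith
    have hwj : ∀ j ∈ Finset.Icc 0 m, ‖(x j : ℂ) / z‖ ≤ M / ‖z‖ := by
      intro j hj
      rw [norm_div, Complex.norm_real, Real.norm_eq_abs]
      gcongr
      exact hMx j hj
    have hwj2 : ∀ j ∈ Finset.Icc 0 m, ‖(x j : ℂ) / z‖ ≤ 1 / 2 :=
      fun j hj => (hwj j hj).trans hhalf
    have hlog : ∀ j ∈ Finset.Icc 0 m,
        Complex.log (z - (x j : ℂ)) = Complex.log z + Complex.log (1 - (x j : ℂ) / z) :=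
      fun j hj => log_split hzim (hwj2 j hj)
    have hzpow : ∀ ℓ : ℕ, z ^ (-(ℓ : ℤ)) = (z ^ ℓ)⁻¹ := fun ℓ => by
      rw [zpow_neg, zpow_natCast]
    have key : szegoL m x s z - ∑ ℓ ∈ Finset.Icc 1 k, dCoef m x s ℓ * z ^ (-(ℓ : ℤ))
        = ∑ j ∈ Finset.Icc 0 m, betaCoef s j *
            (Complex.log (1 - (x j : ℂ) / z) + ∑ ℓ ∈ Finset.Icc 1 k, ((x j : ℂ) / z) ^ ℓ / ℓ) := by
      have e1 : szegoL m x s z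
          = ∑ j ∈ Finset.Icc 0 m, betaCoef s j * Complex.log (1 - (x j : ℂ) / z) := by
        rw [szegoL, Finset.sum_congr rfl fun j hj => by rw [hlog j hj, mul_add],
          Finset.sum_add_distrib, ← Finset.sum_mul, hbsum, zero_mul, zero_add]
      have e2 : ∑ ℓ ∈ Finset.Icc 1 k, dCoef m x s ℓ * z ^ (-(ℓ : ℤ))
          = ∑ j ∈ Finset.Icc 0 m, betaCoef s j *
              (-(∑ ℓ ∈ Finset.Icc 1 k, ((x j : ℂ) / z) ^ ℓ / ℓ)) := by
        rw [Finset.sum_congr rfl fun ℓ _ => by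
          rw [dCoef, hzpow ℓ, neg_mul, neg_mul, Finset.mul_sum, Finset.sum_mul,
            ← Finset.sum_neg_distrib]]
        rw [Finset.sum_comm]
        refine Finset.sum_congr rfl fun j _ => ?_
        rw [Finset.sum_neg_distrib, mul_neg, neg_inj, Finset.mul_sum]
        refine Finset.sum_congr rfl fun ℓ _ => ?_
        rw [div_pow]
        ring
      rw [e1, e2, ← Finset.sum_sub_distrib]
      exact Finset.sum_congr rfl fun j hj => by ring
    rw [key]
    have hinv : ‖z‖ ^ (-((k : ℤ) + 1)) = (‖z‖ ^ (k + 1))⁻¹ := by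
      rw [show -((k : ℤ) + 1) = -(((k + 1 : ℕ) : ℤ)) by push_cast; ring, zpow_neg,
        zpow_natCast]
    rw [hinv]
    calc ‖∑ j ∈ Finset.Icc 0 m, betaCoef s j *
            (Complex.log (1 - (x j : ℂ) / z) + ∑ ℓ ∈ Finset.Icc 1 k, ((x j : ℂ) / z) ^ ℓ / ℓ)‖
        ≤ ∑ j ∈ Finset.Icc 0 m, ‖betaCoef s j *
            (Complex.log (1 - (x j : ℂ) / z) + ∑ ℓ ∈ Finset.Icc 1 k, ((x j : ℂ) / z) ^ ℓ / ℓ)‖ :=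
          norm_sum_le _ _
      _ ≤ ∑ j ∈ Finset.Icc 0 m, ‖betaCoef s j‖ *
            (2 * M ^ (k + 1) * (‖z‖ ^ (k + 1))⁻¹) := by
          refine Finset.sum_le_sum fun j hj => ?_
          rw [norm_mul]
          refine mul_le_mul_of_nonneg_left ?_ (norm_nonneg _)
          calc ‖Complex.log (1 - (x j : ℂ) / z)
                  + ∑ ℓ ∈ Finset.Icc 1 k, ((x j : ℂ) / z) ^ ℓ / ℓ‖
              ≤ 2 * ‖(x j : ℂ) / z‖ ^ (k + 1) := log_taylor_bound (hwj2 j hj) k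
            _ ≤ 2 * (M / ‖z‖) ^ (k + 1) :=
                mul_le_mul_of_nonneg_left
                  (pow_le_pow_left₀ (norm_nonneg _) (hwj j hj) (k + 1)) (by norm_num)
            _ = 2 * M ^ (k + 1) * (‖z‖ ^ (k + 1))⁻¹ := by
                rw [div_pow]; ring
      _ = B * (2 * M ^ (k + 1) * (‖z‖ ^ (k + 1))⁻¹) := by
          rw [← Finset.sum_mul]
      _ ≤ (B + 1) * 2 * M ^ (k + 1) * (‖z‖ ^ (k + 1))⁻¹ := by
          have h1 : B ≤ B + 1 := by linarith
          have h2 : (0:ℝ) < ‖z‖ ^ (k + 1) := by positivity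
          have h3 : (0:ℝ) < M ^ (k + 1) := by positivity
          calc B * (2 * M ^ (k + 1) * (‖z‖ ^ (k + 1))⁻¹)
              ≤ (B + 1) * (2 * M ^ (k + 1) * (‖z‖ ^ (k + 1))⁻¹) := by
                refine mul_le_mul_of_nonneg_right h1 (by positivity)
            _ = (B + 1) * 2 * M ^ (k + 1) * (‖z‖ ^ (k + 1))⁻¹ := by ring
  -- Part 2
  have part2 : ∀ ℓ : ℕ, 1 ≤ ℓ →
      dCoef m x s ℓ = -(1 / (2 * ↑Real.pi * Complex.I * (ℓ : ℂ))) *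
        ∑ j ∈ Finset.Icc 1 m,
          (↑(Real.log (s j)) : ℂ) * ((↑(x j) : ℂ) ^ ℓ - (↑(x (j - 1)) : ℂ) ^ ℓ) := by
    intro ℓ hℓ
    have hre : ∑ j ∈ Finset.Icc 1 m,
        (↑(Real.log (s j)) : ℂ) * ((↑(x j) : ℂ) ^ ℓ - (↑(x (j - 1)) : ℂ) ^ ℓ)
        = ∑ j ∈ Finset.range m, a (j + 1) * ((↑(x (j + 1)) : ℂ) ^ ℓ - (↑(x j) : ℂ) ^ ℓ) := by
      rw [show Finset.Icc 1 m = Finset.Ico 1 (m + 1) by rw [Finset.Ico_add_one_right_eq_Icc],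
        Finset.sum_Ico_eq_sum_range]
      simp only [Nat.add_sub_cancel]
      refine Finset.sum_congr rfl fun j hj => ?_
      have h1 : 1 + j = j + 1 := Nat.add_comm 1 j
      have h2 : j + 1 - 1 = j := by omega
      rw [h1, h2]
    have e3 : ∑ j ∈ Finset.Icc 0 m, betaCoef s j * (↑(x j) : ℂ) ^ ℓ
        = c * ∑ j ∈ Finset.range (m + 1), (a j - a (j + 1)) * (↑(x j) : ℂ) ^ ℓ := by
      rw [← hIcc, Finset.mul_sum]
      refine Finset.sum_congr rfl fun j hj => ?_
      rw [hbeta j hj]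
      ring
    rw [dCoef, e3, abel_aux a (fun j => ((x j : ℂ)) ^ ℓ) m, ha0, ham, hre]
    simp only [zero_mul, sub_zero, zero_sub, neg_zero, zero_add, sub_self]
    rw [hc]
    ring
  refine ⟨part1, part2, ?_⟩
  -- Part 3
  obtain ⟨C, hC, R, hR, hb⟩ := part1 1 le_rfl
  set d1 : ℂ := dCoef m x s 1 with hd1
  have hb2 : ∀ z : ℂ, 0 < z.im → R ≤ ‖z‖ →
      ‖szegoL m x s z - d1 * z⁻¹‖ ≤ C * ((‖z‖) ^ 2)⁻¹ := by
    intro z h1 h2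
    have h := hb z h1 h2
    rw [show ∑ ℓ ∈ Finset.Icc 1 1, dCoef m x s ℓ * z ^ (-(ℓ : ℤ)) = d1 * z⁻¹ by
      rw [Finset.Icc_self, Finset.sum_singleton, hd1]; norm_num] at h
    rw [show (-(((1:ℕ) : ℤ) + 1)) = (-2 : ℤ) by norm_num] at h
    rwa [show (‖z‖) ^ (-2 : ℤ) = ((‖z‖) ^ 2)⁻¹ by
      rw [zpow_neg, zpow_two, sq]] at h
  have hDval : ∀ z : ℂ, 0 < z.im → szegoDup m x s z = Complex.exp (szegoL m x s z) := by
    intro z hz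
    rw [szegoDup, szegoL, Complex.exp_sum]
    refine Finset.prod_congr rfl fun j hj => ?_
    have hne : z - (x j : ℂ) ≠ 0 := by
      intro h
      have h2 := congrArg Complex.im h
      simp at h2
      linarith
    rw [Complex.cpow_def_of_ne_zero hne, mul_comm]
  set K : ℝ := (‖d1‖ + C) ^ 2 + C with hK
  set R' : ℝ := max R (max 1 (2 * (‖d1‖ + C))) with hR'
  set l : Filter ℂ := Filter.comap (fun z : ℂ => ‖z‖) Filter.atTop ⊓
      Filter.principal {z : ℂ | 0 < z.im} with hl
  have habs : Filter.Tendsto (fun z : ℂ => ‖z‖) l Filter.atTop :=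
    Filter.tendsto_comap.mono_left inf_le_left
  rw [← tendsto_sub_nhds_zero_iff]
  apply squeeze_zero_norm' (a := fun z : ℂ => K / ‖z‖)
  · have hev1 : ∀ᶠ z : ℂ in l, R' ≤ ‖z‖ := habs.eventually_ge_atTop R'
    have hev2 : ∀ᶠ z : ℂ in l, 0 < z.im := by
      rw [hl]
      exact (Filter.eventually_principal.mpr fun z hz => hz).filter_mono inf_le_right
    filter_upwards [hev1, hev2] with z hz1 hz2
    have hz1R : R ≤ ‖z‖ := le_trans (le_max_left _ _) hz1
    have hz11 : 1 ≤ ‖z‖ := le_trans ((le_max_left _ _).trans (le_max_right _ _)) hz1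
    have hz12 : 2 * (‖d1‖ + C) ≤ ‖z‖ :=
      le_trans ((le_max_right _ _).trans (le_max_right _ _)) hz1
    have hzpos : 0 < ‖z‖ := lt_of_lt_of_le one_pos hz11
    have hz0 : z ≠ 0 := by
      intro h; rw [h] at hzpos; simp at hzpos
    set Lz : ℂ := szegoL m x s z with hLz
    have h1 : ‖Lz - d1 * z⁻¹‖ ≤ C * ((‖z‖) ^ 2)⁻¹ := hb2 z hz2 hz1R
    have hd1z : ‖d1 * z⁻¹‖ = ‖d1‖ / ‖z‖ := by
      rw [norm_mul, norm_inv, div_eq_mul_inv]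
    have hLbound : ‖Lz‖ ≤ (‖d1‖ + C) / ‖z‖ := by
      calc ‖Lz‖
          ≤ ‖Lz - d1 * z⁻¹‖ + ‖d1 * z⁻¹‖ := by
            have := norm_add_le (Lz - d1 * z⁻¹) (d1 * z⁻¹)
            simpa using this
        _ ≤ C * ((‖z‖) ^ 2)⁻¹ + ‖d1‖ / ‖z‖ := by
            rw [hd1z]; gcongr
        _ ≤ C / ‖z‖ + ‖d1‖ / ‖z‖ := by
            have hstep : ((‖z‖) ^ 2)⁻¹ ≤ (‖z‖)⁻¹ := by
              rw [sq, mul_inv]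
              calc (‖z‖)⁻¹ * (‖z‖)⁻¹
                  ≤ 1 * (‖z‖)⁻¹ :=
                    mul_le_mul_of_nonneg_right (inv_le_one_of_one_le₀ hz11) (by positivity)
                _ = (‖z‖)⁻¹ := one_mul _
            have h6 : C * ((‖z‖) ^ 2)⁻¹ ≤ C * (‖z‖)⁻¹ :=
              mul_le_mul_of_nonneg_left hstep hC.le
            rw [div_eq_mul_inv C]
            linarith
        _ = (‖d1‖ + C) / ‖z‖ := by ring
    have hL1 : ‖Lz‖ ≤ 1 := by
      have h5 : (‖d1‖ + C) / ‖z‖ ≤ 1 / 2 := by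
        rw [div_le_div_iff₀ hzpos (by norm_num)]
        linarith
      linarith [hLbound]
    have hexp : ‖Complex.exp Lz - 1 - Lz‖ ≤ ‖Lz‖ ^ 2 :=
      Complex.norm_exp_sub_one_sub_id_le hL1
    have hkey : z * (szegoDup m x s z - 1) - d1
        = z * (Complex.exp Lz - 1 - Lz) + z * (Lz - d1 * z⁻¹) := by
      rw [hDval z hz2, ← hLz]
      field_simp
      ring
    calc ‖z * (szegoDup m x s z - 1) - d1‖
        = ‖z * (Complex.exp Lz - 1 - Lz) + z * (Lz - d1 * z⁻¹)‖ := by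
          rw [hkey]
      _ ≤ ‖z‖ * ‖Complex.exp Lz - 1 - Lz‖
            + ‖z‖ * ‖Lz - d1 * z⁻¹‖ := by
          refine (norm_add_le _ _).trans ?_
          rw [norm_mul, norm_mul]
      _ ≤ ‖z‖ * ((‖d1‖ + C) / ‖z‖) ^ 2
            + ‖z‖ * (C * ((‖z‖) ^ 2)⁻¹) := by
          have hA : ‖Complex.exp Lz - 1 - Lz‖
              ≤ ((‖d1‖ + C) / ‖z‖) ^ 2 := by
            calc ‖Complex.exp Lz - 1 - Lz‖ ≤ ‖Lz‖ ^ 2 := hexp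
              _ ≤ ((‖d1‖ + C) / ‖z‖) ^ 2 := by
                  gcongr
          gcongr
      _ = K / ‖z‖ := by
          rw [hK]
          field_simp
  · exact Filter.Tendsto.div_atTop tendsto_const_nhds habs
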